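/- arXiv:1503.08060 — 2 statements merged into one kernel-verified Lean document; each statement's English description precedes it below -/
import Mathlib

section
/- (One-dimensional Brascamp–Lieb inequality.) Let ψ : ℝ → ℝ be twice continuously differentiable with ψ''(x) > 0 for all x and exp(−ψ) integrable, and let p be the probability measure on ℝ with density proportional to exp(−ψ). Then for every continuously differentiable S : ℝ → ℝ such that S is square-integrable with respect to p and x ↦ S'(x)²/ψ''(x) is p-integrable, one has Var_p(S) ≤ E_p[S'(x)²/ψ''(x)]. -/
/-!
Write `ρ = exp (-ψ)`, let `T` have `∫ T ρ = 0` and put `h x = ∫_{(-∞, x]} T ρ`. The boundary term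
`D = 2 T h + ψ' h² e^ψ` satisfies
`T'² ρ / ψ'' - T² ρ + D' = (T' + ψ'' h e^ψ)² ρ / ψ'' + (T + ψ' h e^ψ)² ρ ≥ 0`,
so `∫ (T'² / ψ'' - T²) ρ ≥ 0` as soon as `D` is frequently small near `±∞`. Near `+∞` the centring
makes `h` minus the tail `∫_x^∞ T ρ`; Cauchy–Schwarz and the tangent-line bound
`∫_x^∞ ρ ≤ ρ x / ψ' x` give `ψ' h² e^ψ ≤ ∫_x^∞ T² ρ`, and `2 T h ≤ T² ρ / ψ' + ψ' h² e^ψ`, where the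
integrable `T² ρ` is frequently small. Near `-∞` the same argument applies to `x ↦ -x`.
Applying this to `T = S - E_p S` gives the inequality.
-/

open MeasureTheory Real

noncomputable section

/-- The probability measure on ℝ with density proportional to `exp (−ψ)`. -/
def gibbs (ψ : ℝ → ℝ) : Measure ℝ :=
  ((volume.withDensity fun x => ENNReal.ofReal (Real.exp (-ψ x))) Set.univ)⁻¹ •
    (volume.withDensity fun x => ENNReal.ofReal (Real.exp (-ψ x)))

open Set Filter Topology

theorem sq_integral_mul_le_integral_sq_mul_mul_integral {α : Type*} [MeasurableSpace α]
    {μ : Measure α} {g w : α → ℝ} (hw₀ : 0 ≤ w) (hw : Integrable w μ)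
    (hgw : Integrable (fun a => g a * w a) μ) (hg2w : Integrable (fun a => g a ^ 2 * w a) μ) :
    (∫ a, g a * w a ∂μ) ^ 2 ≤ (∫ a, g a ^ 2 * w a ∂μ) * ∫ a, w a ∂μ := by
  have hquad : ∀ c : ℝ, 0 ≤ (∫ a, w a ∂μ) * (c * c) + (-2 * ∫ a, g a * w a ∂μ) * c
      + ∫ a, g a ^ 2 * w a ∂μ := fun c =>
    calc 0 ≤ ∫ a, (g a - c) ^ 2 * w a ∂μ :=
          integral_nonneg fun a => mul_nonneg (sq_nonneg _) (hw₀ a)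
      _ = ∫ a, ((c * c) * w a + (-2 * c) * (g a * w a) + g a ^ 2 * w a) ∂μ :=
          integral_congr_ae (.of_forall fun a => by ring)
      _ = _ := by
          have hlin : Integrable (fun a => c * c * w a + -2 * c * (g a * w a)) μ :=
            (hw.const_mul _).add (hgw.const_mul _)
          rw [integral_add hlin hg2w, integral_add (hw.const_mul _) (hgw.const_mul _),
            integral_const_mul, integral_const_mul]
          ring
  have := discrim_le_zero hquad
  rw [discrim] at this
  linarith

theorem MeasureTheory.Integrable.frequently_atTop_abs_lt {f : ℝ → ℝ} (hf : Integrable f) {ε : ℝ}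
    (hε : 0 < ε) :
    ∃ᶠ x in atTop, |f x| < ε := by
  intro h
  obtain ⟨A, hA⟩ := eventually_atTop.1 h
  have hconst : IntegrableOn (fun _ => ε) (Ici A) := by
    refine hf.abs.integrableOn.mono' aestronglyMeasurable_const ?_
    filter_upwards [ae_restrict_mem measurableSet_Ici] with x hx
    rw [norm_of_nonneg hε.le]
    exact not_lt.1 (hA x hx)
  simp [hε.ne'] at hconst

theorem MeasureTheory.Integrable.tendsto_setIntegral_Ioi_atTop {E : Type*} [NormedAddCommGroup E]
    [NormedSpace ℝ E] {f : ℝ → E} (hf : Integrable f) :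
    Tendsto (fun x => ∫ t in Ioi x, f t) atTop (𝓝 0) := by
  have := tendsto_setIntegral_of_antitone (μ := volume) (s := fun x : ℝ => Ioi x)
    (fun _ => measurableSet_Ioi) (fun _ _ hab => Ioi_subset_Ioi hab) ⟨0, hf.integrableOn⟩
  have hempty : ⋂ x : ℝ, Ioi x = ∅ :=
    eq_empty_of_forall_notMem fun x hx => lt_irrefl x (mem_iInter.1 hx x)
  simpa [hempty] using this

theorem hasDerivAt_setIntegral_Iic {f : ℝ → ℝ} (hf : Integrable f) (hfc : Continuous f) (x : ℝ) :
    HasDerivAt (fun y => ∫ t in Iic y, f t) (f x) x := by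
  refine ((intervalIntegral.integral_hasDerivAt_right (a := 0) hf.intervalIntegrable
    hfc.aestronglyMeasurable.stronglyMeasurableAtFilter hfc.continuousAt).const_add
    (∫ t in Iic 0, f t)).congr_of_eventuallyEq (.of_forall fun y => ?_)
  simp only
  rw [← intervalIntegral.integral_Iic_sub_Iic hf.integrableOn hf.integrableOn]
  ring

theorem integral_nonneg_of_hasDerivAt_of_frequently {f D D' : ℝ → ℝ} (hf : Integrable f)
    (hD : ∀ x, HasDerivAt D (D' x) x) (hfD : ∀ x, 0 ≤ f x + D' x)
    (hbot : ∀ ε > 0, ∃ᶠ x in atBot, -ε < D x) (htop : ∀ ε > 0, ∃ᶠ x in atTop, D x < ε) :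
    0 ≤ ∫ x, f x := by
  have hinterval : ∀ a b, a ≤ b → D a - D b ≤ ∫ x in a..b, f x := fun a b hab => by
    have := intervalIntegral.sub_le_integral_of_hasDeriv_right_of_le (g := fun x => -D x) hab
      (fun x _ => (hD x).continuousAt.neg.continuousWithinAt)
      (fun x _ => (hD x).neg.hasDerivWithinAt) hf.integrableOn (fun x _ => by linarith [hfD x])
    linarith
  refine le_of_forall_pos_lt_add fun ε hε => ?_
  have hlim := intervalIntegral_tendsto_integral hf (tendsto_fst (g := atTop))
    (tendsto_snd (f := atBot))
  obtain ⟨pa, hpa, pb, hpb, hp⟩ := eventually_prod_iff.1 (hlim.eventually_lt_const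
    (show ∫ x, f x < (∫ x, f x) + ε / 3 by linarith))
  obtain ⟨a, ha, hpa, ha0⟩ := ((hbot _ (by positivity : 0 < ε / 3)).and_eventually
    (hpa.and (eventually_le_atBot 0))).exists
  obtain ⟨b, hb, hpb, hb0⟩ := ((htop _ (by positivity : 0 < ε / 3)).and_eventually
    (hpb.and (eventually_ge_atTop 0))).exists
  linarith [hinterval a b (by linarith), hp hpa hpb]

theorem integral_tilted_eq_div {α : Type*} [MeasurableSpace α] {μ : Measure α} (f g : α → ℝ) :
    ∫ x, g x ∂(μ.tilted f) = (∫ x, g x * exp (f x) ∂μ) / ∫ x, exp (f x) ∂μ := by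
  rw [integral_tilted, ← integral_div]
  congr with x
  rw [smul_eq_mul]
  ring

section LogConcave

variable {ψ : ℝ → ℝ}

theorem exists_deriv_pos_of_integrable_exp_neg (hψ : Differentiable ℝ ψ)
    (hρ : Integrable fun x => exp (-ψ x)) : ∃ x₀, 0 < deriv ψ x₀ := by
  by_contra! h
  have hanti : Antitone ψ := antitone_of_deriv_nonpos hψ h
  obtain ⟨x, hx, hx0⟩ := ((hρ.frequently_atTop_abs_lt (exp_pos (-ψ 0))).and_eventually
    (eventually_ge_atTop 0)).exists
  rw [abs_of_pos (exp_pos _), exp_lt_exp] at hx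
  linarith [hanti hx0]

theorem setIntegral_Ioi_exp_neg_le (hψ : Differentiable ℝ ψ) (hψ' : Monotone (deriv ψ))
    (hρ : Integrable fun x => exp (-ψ x)) {x : ℝ} (hx : 0 < deriv ψ x) :
    ∫ t in Ioi x, exp (-ψ t) ≤ exp (-ψ x) / deriv ψ x := by
  set a := deriv ψ x
  have htangent : ∀ t ∈ Ioi x, exp (-ψ t) ≤ exp (-ψ x + a * x) * exp (-a * t) := by
    intro t ht
    have := (convex_Ici x).mul_sub_le_image_sub_of_le_deriv (C := a) hψ.continuous.continuousOn
      hψ.differentiableOn (fun y hy => hψ' (by rw [interior_Ici] at hy; exact hy.le))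
      x self_mem_Ici t (mem_Ici.2 (le_of_lt ht)) (le_of_lt ht)
    rw [← exp_add, exp_le_exp]
    linarith
  calc ∫ t in Ioi x, exp (-ψ t)
      ≤ ∫ t in Ioi x, exp (-ψ x + a * x) * exp (-a * t) :=
        setIntegral_mono_on hρ.integrableOn
          ((integrableOn_exp_mul_Ioi (by linarith) x).const_mul _) measurableSet_Ioi htangent
    _ = exp (-ψ x) / a := by
        rw [integral_const_mul, integral_exp_mul_Ioi (by linarith)]
        field_simp
        rw [← exp_add]
        ring_nf

theorem deriv_mul_sq_setIntegral_Ioi_mul_exp_le (hψ : Differentiable ℝ ψ)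
    (hψ' : Monotone (deriv ψ)) (hρ : Integrable fun x => exp (-ψ x)) {g : ℝ → ℝ}
    (hgρ : Integrable fun x => g x * exp (-ψ x)) (hg2ρ : Integrable fun x => g x ^ 2 * exp (-ψ x))
    {x : ℝ} (hx : 0 < deriv ψ x) :
    deriv ψ x * (∫ t in Ioi x, g t * exp (-ψ t)) ^ 2 * exp (ψ x) ≤
      ∫ t in Ioi x, g t ^ 2 * exp (-ψ t) := by
  have hcs := sq_integral_mul_le_integral_sq_mul_mul_integral (μ := volume.restrict (Ioi x))
    (fun t => (exp_pos (-ψ t)).le) hρ.integrableOn hgρ.integrableOn hg2ρ.integrableOn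
  have htail := setIntegral_Ioi_exp_neg_le hψ hψ' hρ hx
  have hG : 0 ≤ ∫ t in Ioi x, g t ^ 2 * exp (-ψ t) :=
    setIntegral_nonneg measurableSet_Ioi fun t _ => by positivity
  calc deriv ψ x * (∫ t in Ioi x, g t * exp (-ψ t)) ^ 2 * exp (ψ x)
      ≤ deriv ψ x * ((∫ t in Ioi x, g t ^ 2 * exp (-ψ t)) * (exp (-ψ x) / deriv ψ x))
          * exp (ψ x) := by
        gcongr
        exact hcs.trans (mul_le_mul_of_nonneg_left htail hG)
    _ = ∫ t in Ioi x, g t ^ 2 * exp (-ψ t) := by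
        field_simp
        rw [mul_assoc, ← exp_add]
        simp

def boundaryTerm (ψ g h : ℝ → ℝ) (x : ℝ) : ℝ :=
  2 * g x * h x + deriv ψ x * h x ^ 2 * exp (ψ x)

theorem hasDerivAt_boundaryTerm {g h : ℝ → ℝ} {g' x : ℝ} (hψ : DifferentiableAt ℝ ψ x)
    (hψ' : DifferentiableAt ℝ (deriv ψ) x) (hψ'' : deriv (deriv ψ) x ≠ 0)
    (hg : HasDerivAt g g' x) (hh : HasDerivAt h (g x * exp (-ψ x)) x) :
    HasDerivAt (boundaryTerm ψ g h)
      ((g' + deriv (deriv ψ) x * h x * exp (ψ x)) ^ 2 / (deriv (deriv ψ) x * exp (ψ x))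
        + (g x + deriv ψ x * h x * exp (ψ x)) ^ 2 / exp (ψ x)
        - (g' ^ 2 / deriv (deriv ψ) x * exp (-ψ x) - g x ^ 2 * exp (-ψ x))) x := by
  refine (((hg.const_mul 2).fun_mul hh).fun_add
    ((hψ'.hasDerivAt.fun_mul (hh.fun_pow 2)).fun_mul hψ.hasDerivAt.exp)).congr_deriv ?_
  rw [exp_neg]
  field_simp
  ring

theorem frequently_boundaryTerm_lt (hψ : Differentiable ℝ ψ) (hψ' : Monotone (deriv ψ))
    (hρ : Integrable fun x => exp (-ψ x)) {g : ℝ → ℝ}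
    (hgρ : Integrable fun x => g x * exp (-ψ x)) (hg2ρ : Integrable fun x => g x ^ 2 * exp (-ψ x))
    {ε : ℝ} (hε : 0 < ε) :
    ∃ᶠ x in atTop, boundaryTerm ψ g (fun y => -∫ t in Ioi y, g t * exp (-ψ t)) x < ε := by
  obtain ⟨x₀, hx₀⟩ := exists_deriv_pos_of_integrable_exp_neg hψ hρ
  have hsmall := hg2ρ.frequently_atTop_abs_lt (show 0 < ε * deriv ψ x₀ / 2 by positivity)
  have htail := hg2ρ.tendsto_setIntegral_Ioi_atTop.eventually_lt_const
    (show (0 : ℝ) < ε / 4 by positivity)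
  refine (hsmall.and_eventually (htail.and (eventually_ge_atTop x₀))).mono ?_
  rintro x ⟨hgx, hGx, hx⟩
  have hderiv : deriv ψ x₀ ≤ deriv ψ x := hψ' hx
  have hpos : 0 < deriv ψ x := hx₀.trans_le hderiv
  have hkG := deriv_mul_sq_setIntegral_Ioi_mul_exp_le hψ hψ' hρ hgρ hg2ρ hpos
  set k := ∫ t in Ioi x, g t * exp (-ψ t)
  set G := ∫ t in Ioi x, g t ^ 2 * exp (-ψ t)
  rw [abs_of_nonneg (by positivity)] at hgx
  have hamgm : -(2 * g x * k) ≤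
      g x ^ 2 * exp (-ψ x) / deriv ψ x + deriv ψ x * k ^ 2 * exp (ψ x) := by
    have hsq : g x ^ 2 * exp (-ψ x) / deriv ψ x + deriv ψ x * k ^ 2 * exp (ψ x) + 2 * g x * k
        = (g x + deriv ψ x * k * exp (ψ x)) ^ 2 / (deriv ψ x * exp (ψ x)) := by
      rw [exp_neg]
      field_simp
      ring
    have : 0 ≤ (g x + deriv ψ x * k * exp (ψ x)) ^ 2 / (deriv ψ x * exp (ψ x)) := by positivity
    linarith
  have hgx' : g x ^ 2 * exp (-ψ x) / deriv ψ x < ε / 2 :=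
    calc g x ^ 2 * exp (-ψ x) / deriv ψ x ≤ g x ^ 2 * exp (-ψ x) / deriv ψ x₀ := by gcongr
      _ < ε / 2 := by rw [div_lt_iff₀ hx₀]; linarith
  unfold boundaryTerm
  linarith

theorem frequently_neg_lt_boundaryTerm (hψ : Differentiable ℝ ψ) (hψ' : Monotone (deriv ψ))
    (hρ : Integrable fun x => exp (-ψ x)) {g : ℝ → ℝ}
    (hgρ : Integrable fun x => g x * exp (-ψ x)) (hg2ρ : Integrable fun x => g x ^ 2 * exp (-ψ x))
    {ε : ℝ} (hε : 0 < ε) :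
    ∃ᶠ x in atBot, -ε < boundaryTerm ψ g (fun y => ∫ t in Iic y, g t * exp (-ψ t)) x := by
  have hderiv_neg : deriv (fun x => ψ (-x)) = fun x => -deriv ψ (-x) :=
    funext fun x => deriv_comp_neg ψ x
  have hmono_neg : Monotone (deriv fun x => ψ (-x)) := fun a b hab => by
    simp only [hderiv_neg]
    exact neg_le_neg (hψ' (neg_le_neg hab))
  have hreflected := frequently_boundaryTerm_lt (ψ := fun x => ψ (-x)) (g := fun x => g (-x))
    (hψ.comp differentiable_neg) hmono_neg hρ.comp_neg hgρ.comp_neg hg2ρ.comp_neg hε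
  refine tendsto_neg_atTop_atBot.frequently (hreflected.mono fun y hy => ?_)
  have hmirror : boundaryTerm ψ g (fun y => ∫ t in Iic y, g t * exp (-ψ t)) (-y) =
      -boundaryTerm (fun x => ψ (-x)) (fun x => g (-x))
        (fun y => -∫ t in Ioi y, g (-t) * exp (-ψ (-t))) y := by
    simp only [boundaryTerm, hderiv_neg, integral_comp_neg_Ioi (f := fun t => g t * exp (-ψ t))]
    ring
  linarith

theorem integral_sq_mul_exp_neg_le {T : ℝ → ℝ} (hψ : Differentiable ℝ ψ)
    (hψ' : Differentiable ℝ (deriv ψ)) (hconv : ∀ x, 0 < deriv (deriv ψ) x)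
    (hρ : Integrable fun x => exp (-ψ x)) (hT : Differentiable ℝ T)
    (hTρ : Integrable fun x => T x * exp (-ψ x)) (hT2ρ : Integrable fun x => T x ^ 2 * exp (-ψ x))
    (hTdρ : Integrable fun x => deriv T x ^ 2 / deriv (deriv ψ) x * exp (-ψ x))
    (hT0 : ∫ x, T x * exp (-ψ x) = 0) :
    ∫ x, T x ^ 2 * exp (-ψ x) ≤ ∫ x, deriv T x ^ 2 / deriv (deriv ψ) x * exp (-ψ x) := by
  set h : ℝ → ℝ := fun x => ∫ t in Iic x, T t * exp (-ψ t)
  have hmono : Monotone (deriv ψ) := (strictMono_of_deriv_pos hconv).monotone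
  have hh : ∀ x, HasDerivAt h (T x * exp (-ψ x)) x :=
    hasDerivAt_setIntegral_Iic hTρ (hT.continuous.mul hψ.continuous.neg.rexp)
  have hD x := hasDerivAt_boundaryTerm (hψ x) (hψ' x) (hconv x).ne' (hT x).hasDerivAt (hh x)
  have h_eq_neg_tail : h = fun y => -∫ t in Ioi y, T t * exp (-ψ t) := by
    funext y
    have := integral_add_compl (measurableSet_Iic (a := y)) hTρ
    rw [compl_Iic, hT0] at this
    simp only [h]
    linarith
  have hf := integral_nonneg_of_hasDerivAt_of_frequently
    (f := fun x => deriv T x ^ 2 / deriv (deriv ψ) x * exp (-ψ x) - T x ^ 2 * exp (-ψ x))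
    (hTdρ.sub hT2ρ) hD (fun x => by rw [add_sub_cancel]; have := hconv x; positivity)
    (fun ε hε => frequently_neg_lt_boundaryTerm hψ hmono hρ hTρ hT2ρ hε)
    (fun ε hε => h_eq_neg_tail ▸ frequently_boundaryTerm_lt hψ hmono hρ hTρ hT2ρ hε)
  rw [integral_sub hTdρ hT2ρ] at hf
  linarith

theorem gibbs_eq_tilted (hρ : Integrable fun x => exp (-ψ x)) :
    gibbs ψ = volume.tilted fun x => -ψ x := by
  have hmass : (volume.withDensity fun x => ENNReal.ofReal (exp (-ψ x))) univ
      = ENNReal.ofReal (∫ x, exp (-ψ x)) := by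
    rw [withDensity_apply _ MeasurableSet.univ, Measure.restrict_univ,
      ofReal_integral_eq_lintegral_ofReal hρ (.of_forall fun x => (exp_pos _).le)]
  rw [gibbs, hmass, Measure.tilted, ← withDensity_smul' _ _ (by simpa using integral_exp_pos hρ)]
  congr with x
  rw [ENNReal.ofReal_div_of_pos (integral_exp_pos hρ), ENNReal.div_eq_inv_mul]
  rfl

theorem integral_sq_tilted_le {T : ℝ → ℝ} (hψ : Differentiable ℝ ψ)
    (hψ' : Differentiable ℝ (deriv ψ)) (hconv : ∀ x, 0 < deriv (deriv ψ) x)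
    (hρ : Integrable fun x => exp (-ψ x)) (hT : Differentiable ℝ T)
    (hT2 : MemLp T 2 (volume.tilted fun x => -ψ x))
    (hTd : Integrable (fun x => deriv T x ^ 2 / deriv (deriv ψ) x) (volume.tilted fun x => -ψ x))
    (hT0 : ∫ x, T x ∂(volume.tilted fun x => -ψ x) = 0) :
    ∫ x, T x ^ 2 ∂(volume.tilted fun x => -ψ x) ≤
      ∫ x, deriv T x ^ 2 / deriv (deriv ψ) x ∂(volume.tilted fun x => -ψ x) := by
  have hdensity : ∀ g : ℝ → ℝ, Integrable g (volume.tilted fun x => -ψ x) →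
      Integrable fun x => g x * exp (-ψ x) := fun g hg => by
    simpa [mul_comm] using (integrable_tilted_iff hρ g).1 hg
  have hZ := integral_exp_pos (μ := volume) hρ
  rw [integral_tilted_eq_div] at hT0 ⊢
  rw [integral_tilted_eq_div]
  refine div_le_div_of_nonneg_right ?_ hZ.le
  exact integral_sq_mul_exp_neg_le hψ hψ' hconv hρ hT (hdensity _ (hT2.integrable one_le_two))
    (hdensity _ hT2.integrable_sq) (hdensity _ hTd) ((div_eq_zero_iff.1 hT0).resolve_right hZ.ne')

end LogConcave

/-- one-dimensional Brascamp–Lieb inequality: if `ψ` is C² with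
`ψ'' > 0` everywhere and `exp (−ψ)` integrable, `p ∝ exp (−ψ)`, then for every C¹
function `S` square-integrable w.r.t. `p` with `S'²/ψ''` `p`-integrable,
`Var_p(S) ≤ E_p[S'²/ψ'']`. -/
theorem brascamp_lieb_one_dim
    (ψ : ℝ → ℝ) (hψ : ContDiff ℝ 2 ψ)
    (hconv : ∀ x, 0 < iteratedDeriv 2 ψ x)
    (hint : Integrable fun x => Real.exp (-ψ x))
    (S : ℝ → ℝ) (hS : ContDiff ℝ 1 S)
    (hS2 : MemLp S 2 (gibbs ψ))
    (hSd : Integrable (fun x => (deriv S x) ^ 2 / iteratedDeriv 2 ψ x) (gibbs ψ)) :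
    (∫ x, (S x) ^ 2 ∂(gibbs ψ)) - (∫ x, S x ∂(gibbs ψ)) ^ 2 ≤
      ∫ x, (deriv S x) ^ 2 / iteratedDeriv 2 ψ x ∂(gibbs ψ) := by
  have hψ₂ : iteratedDeriv 2 ψ = deriv (deriv ψ) := by
    rw [iteratedDeriv_succ, iteratedDeriv_one]
  have hψ' : Differentiable ℝ (deriv ψ) := by
    rw [← iteratedDeriv_one]
    exact hψ.differentiable_iteratedDeriv 1 (by norm_num)
  rw [hψ₂] at hconv hSd ⊢
  rw [gibbs_eq_tilted hint] at hS2 hSd ⊢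
  have := isProbabilityMeasure_tilted (μ := volume) hint
  set m := ∫ x, S x ∂(volume.tilted fun x => -ψ x)
  have hvar := ProbabilityTheory.variance_eq_sub hS2
  simp only [Pi.pow_apply] at hvar
  rw [← hvar, ProbabilityTheory.variance_eq_integral hS2.aemeasurable]
  have hdS : deriv (fun x => S x - m) = deriv S := deriv_sub_const_fun m
  rw [← hdS] at hSd ⊢
  refine integral_sq_tilted_le (hψ.differentiable (by norm_num)) hψ' hconv hint
    ((hS.differentiable (by norm_num)).sub_const m) (hS2.sub (memLp_const m)) hSd ?_
  rw [integral_sub (hS2.integrable one_le_two) (integrable_const m)]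
  simp [m]
end
end

section
/- (Laplace/moment-generating-function limit under weak assumptions.) Let l : ℝ → ℝ be measurable with 0 ≤ l(x) ≤ 1 for all x, continuous at a point μ0 with l(μ0) > 0, and let δr ∈ ℝ and t ∈ ℝ be fixed. Then lim_{β → ∞} √(β/(2π)) · ∫_ℝ (l(x)/l(μ0)) · exp( t·√β·(x − μ0) − (β/2)(x − μ0)² − δr·(x − μ0) ) dx = exp(t²/2). -/
/-!
Substituting `x = μ0 + y / √β` turns the expression into
`(2π)^{-1/2} ∫ (l(μ0 + y/√β) / l(μ0)) exp(t y - y²/2 - δr y/√β) dy`.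
As `β → ∞` the integrand tends to `exp(t y - y²/2)` by continuity of `l` at `μ0`, and once
`√β ≥ 1` it is dominated by `l(μ0)⁻¹ (exp((t + |δr|) y - y²/2) + exp((t - |δr|) y - y²/2))`,
so by dominated convergence the limit is `(2π)^{-1/2} ∫ exp(t y - y²/2) dy = exp(t²/2)`.
-/

open MeasureTheory Real Filter Topology

lemma exp_mul_sub_sq_div_two_eq (c y : ℝ) :
    exp (c * y - y ^ 2 / 2) = exp (-(2⁻¹ * (y - c) ^ 2)) * exp (c ^ 2 / 2) := by
  rw [← exp_add]
  ring_nf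

lemma integrable_exp_mul_sub_sq_div_two (c : ℝ) :
    Integrable fun y : ℝ => exp (c * y - y ^ 2 / 2) := by
  simp_rw [exp_mul_sub_sq_div_two_eq c]
  have hg : Integrable fun y : ℝ => exp (-(2⁻¹ * y ^ 2)) := by
    simpa only [neg_mul] using integrable_exp_neg_mul_sq (by norm_num : (0 : ℝ) < 2⁻¹)
  exact (hg.comp_sub_right c).mul_const _

lemma integral_exp_mul_sub_sq_div_two (c : ℝ) :
    ∫ y : ℝ, exp (c * y - y ^ 2 / 2) = √(2 * π) * exp (c ^ 2 / 2) := by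
  simp_rw [exp_mul_sub_sq_div_two_eq c]
  rw [integral_mul_const, integral_sub_right_eq_self (fun y => exp (-(2⁻¹ * y ^ 2))) c]
  simp_rw [← neg_mul]
  rw [integral_gaussian, div_inv_eq_mul, mul_comm π]

lemma exp_sub_mul_le_add_exp {s d : ℝ} (h : |s| ≤ d) (a y : ℝ) :
    exp (a - s * y) ≤ exp (a + d * y) + exp (a - d * y) := by
  rcases le_total 0 y with hy | hy
  · refine le_add_of_le_of_nonneg (exp_le_exp.2 ?_) (exp_nonneg _)
    nlinarith [neg_abs_le s]
  · refine le_add_of_nonneg_of_le (exp_nonneg _) (exp_le_exp.2 ?_)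
    nlinarith [le_abs_self s]

theorem tendsto_integral_comp_add_mul_mul_exp {ι : Type*} {L : Filter ι}
    [L.IsCountablyGenerated] {h : ℝ → ℝ} (hmeas : Measurable h) {C : ℝ} (hC : ∀ x, |h x| ≤ C)
    {a : ℝ} (hcont : ContinuousAt h a) (δ t : ℝ) {ε : ι → ℝ} (hε : Tendsto ε L (𝓝 0)) :
    Tendsto (fun i => ∫ y, h (a + ε i * y) * exp (t * y - y ^ 2 / 2 - δ * ε i * y)) L
      (𝓝 (h a * (√(2 * π) * exp (t ^ 2 / 2)))) := by
  rw [← integral_exp_mul_sub_sq_div_two, ← integral_const_mul]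
  refine tendsto_integral_filter_of_dominated_convergence
    (fun y => C * (exp (t * y - y ^ 2 / 2 + |δ| * y) + exp (t * y - y ^ 2 / 2 - |δ| * y)))
    (Eventually.of_forall fun i => by fun_prop) ?_ ?_ ?_
  · have hsmall : ∀ᶠ i in L, |δ * ε i| ≤ |δ| := by
      filter_upwards [hε.abs.eventually (eventually_le_nhds (by norm_num : |(0 : ℝ)| < 1))]
        with i hi
      rw [abs_mul]
      exact mul_le_of_le_one_right (abs_nonneg δ) hi
    filter_upwards [hsmall] with i hi
    refine Eventually.of_forall fun y => ?_
    rw [norm_mul, norm_of_nonneg (exp_nonneg _)]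
    exact mul_le_mul (hC _) (exp_sub_mul_le_add_exp hi _ y) (exp_nonneg _)
      ((abs_nonneg _).trans (hC a))
  · refine Integrable.const_mul ?_ C
    refine ((integrable_exp_mul_sub_sq_div_two (t + |δ|)).add
      (integrable_exp_mul_sub_sq_div_two (t - |δ|))).congr (Eventually.of_forall fun y => ?_)
    simp only [Pi.add_apply]
    ring_nf
  · refine Eventually.of_forall fun y => ?_
    have hx : Tendsto (fun i => a + ε i * y) L (𝓝 a) := by
      simpa using tendsto_const_nhds.add (hε.mul_const y)
    have hexp : Tendsto (fun i => t * y - y ^ 2 / 2 - δ * ε i * y) L (𝓝 (t * y - y ^ 2 / 2)) := by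
      simpa using tendsto_const_nhds.sub ((hε.const_mul δ).mul_const y)
    exact (hcont.tendsto.comp hx).mul ((continuous_exp.tendsto _).comp hexp)

lemma integral_mul_exp_eq_rescaled (h : ℝ → ℝ) (a δ t : ℝ) {β : ℝ} (hβ : 0 < β) :
    ∫ x, h x * exp (t * √β * (x - a) - β / 2 * (x - a) ^ 2 - δ * (x - a)) =
      (√β)⁻¹ * ∫ y, h (a + (√β)⁻¹ * y) * exp (t * y - y ^ 2 / 2 - δ * (√β)⁻¹ * y) := by
  set g := fun y => h (a + (√β)⁻¹ * y) * exp (t * y - y ^ 2 / 2 - δ * (√β)⁻¹ * y)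
  have hs : 0 < √β := sqrt_pos.2 hβ
  have hg : ∀ x, h x * exp (t * √β * (x - a) - β / 2 * (x - a) ^ 2 - δ * (x - a)) =
      g (√β * (x - a)) := by
    intro x
    have hx : a + (√β)⁻¹ * (√β * (x - a)) = x := by rw [inv_mul_cancel_left₀ hs.ne']; ring
    simp only [g, hx]
    rw [mul_pow, sq_sqrt hβ.le]
    field_simp
  simp_rw [hg]
  rw [integral_sub_right_eq_self (fun u => g (√β * u)) a, Measure.integral_comp_mul_left,
    abs_inv, abs_of_pos hs, smul_eq_mul]

/-- Laplace / moment-generating-function limit under weak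
assumptions: for measurable `l` with `0 ≤ l ≤ 1`, continuous at `μ0` with
`l(μ0) > 0`, and fixed `δr, t ∈ ℝ`,
`√(β/(2π)) ∫ (l(x)/l(μ0)) exp(t√β(x−μ0) − (β/2)(x−μ0)² − δr(x−μ0)) dx → exp(t²/2)`
as `β → ∞`. -/
theorem mgf_limit_weak_assumptions
    (l : ℝ → ℝ) (hmeas : Measurable l)
    (hl0 : ∀ x, 0 ≤ l x) (hl1 : ∀ x, l x ≤ 1)
    (μ0 : ℝ) (hcont : ContinuousAt l μ0) (hpos : 0 < l μ0)
    (δr t : ℝ) :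
    Tendsto (fun β : ℝ =>
        Real.sqrt (β / (2 * Real.pi)) *
          ∫ x, (l x / l μ0) *
            Real.exp (t * Real.sqrt β * (x - μ0) - β / 2 * (x - μ0) ^ 2 -
              δr * (x - μ0)))
      atTop (nhds (Real.exp (t ^ 2 / 2))) := by
  have hbound : ∀ x, |l x / l μ0| ≤ (l μ0)⁻¹ := fun x => by
    rw [abs_of_nonneg (div_nonneg (hl0 x) hpos.le), div_eq_mul_inv]
    exact mul_le_of_le_one_left (inv_nonneg.2 hpos.le) (hl1 x)
  have hlim := (tendsto_integral_comp_add_mul_mul_exp (hmeas.div_const (l μ0)) hbound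
    (hcont.div_const (l μ0)) δr t (tendsto_inv_atTop_zero.comp tendsto_sqrt_atTop)).const_mul
    (√(2 * π))⁻¹
  have h2π : √(2 * π) ≠ 0 := by positivity
  rw [div_self hpos.ne', one_mul, ← mul_assoc, inv_mul_cancel₀ h2π, one_mul] at hlim
  refine hlim.congr' ?_
  filter_upwards [eventually_gt_atTop 0] with β hβ
  have hs : √β ≠ 0 := (sqrt_pos.2 hβ).ne'
  rw [integral_mul_exp_eq_rescaled _ _ _ _ hβ, sqrt_div hβ.le, ← mul_assoc]
  congr 1
  field_simp
end
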